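/- arXiv:2403.05985 — 2 statements merged into one kernel-verified Lean document; each statement's English description precedes it below -/
import Mathlib

section
/- For κ ∈ ℝ, R > 0 with |κ|R² < 1, the map (z, μ²) ↦ (a, τ²) with a = z/(1 - κ|z|²) and τ² = -(κz² + μ²)/(1 + κz̄²μ²) is a bijection from {|z| ≤ R} × {|μ²| < 1} onto {|a| ≤ R/(1-κR²)} × {|τ²| < 1}. -/
noncomputable def Bl (c w : ℂ) : ℂ := -(w + c) / (1 + (starRingEnd ℂ) c * w)

section helpers
variable (κ R : ℝ)

lemma den_pos (hκR : |κ| * R ^ 2 < 1) {r : ℝ} (hr0 : 0 ≤ r) (hrR : r ≤ R) :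
    0 < 1 - κ * r ^ 2 := by
  have h1 : κ * r ^ 2 ≤ |κ| * r ^ 2 := by
    have := le_abs_self κ
    nlinarith
  have hrr : r ^ 2 ≤ R ^ 2 := by nlinarith
  have h2 : |κ| * r ^ 2 ≤ |κ| * R ^ 2 := mul_le_mul_of_nonneg_left hrr (abs_nonneg κ)
  linarith

lemma one_add_pos (hκR : |κ| * R ^ 2 < 1) {r s : ℝ} (hr0 : 0 ≤ r) (hrR : r ≤ R)
    (hs0 : 0 ≤ s) (hsR : s ≤ R) : 0 < 1 + κ * (r * s) := by
  have h1 : -|κ| * (r * s) ≤ κ * (r * s) :=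
    mul_le_mul_of_nonneg_right (neg_abs_le κ) (mul_nonneg hr0 hs0)
  have hrs : r * s ≤ R ^ 2 := by nlinarith
  have h2 : |κ| * (r * s) ≤ |κ| * R ^ 2 := mul_le_mul_of_nonneg_left hrs (abs_nonneg κ)
  nlinarith

lemma phi_le (hκR : |κ| * R ^ 2 < 1) {r : ℝ} (hr0 : 0 ≤ r) (hrR : r ≤ R) :
    r / (1 - κ * r ^ 2) ≤ R / (1 - κ * R ^ 2) := by
  have hdr := den_pos κ R hκR hr0 hrR
  have hdR := den_pos κ R hκR (hr0.trans hrR) le_rfl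
  rw [div_le_div_iff₀ hdr hdR]
  have hpos : 0 ≤ (R - r) * (1 + κ * (R * r)) :=
    mul_nonneg (by linarith)
      (le_of_lt (one_add_pos κ R hκR (hr0.trans hrR) le_rfl hr0 hrR))
  nlinarith [hpos]

lemma phi_inj (hκR : |κ| * R ^ 2 < 1) {r s : ℝ} (hr0 : 0 ≤ r) (hrR : r ≤ R)
    (hs0 : 0 ≤ s) (hsR : s ≤ R)
    (h : r / (1 - κ * r ^ 2) = s / (1 - κ * s ^ 2)) : r = s := by
  have hdr := den_pos κ R hκR hr0 hrR
  have hds := den_pos κ R hκR hs0 hsR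
  rw [div_eq_div_iff (ne_of_gt hdr) (ne_of_gt hds)] at h
  have key : (r - s) * (1 + κ * (r * s)) = 0 := by linear_combination h
  rcases mul_eq_zero.1 key with h1 | h1
  · linarith
  · have := one_add_pos κ R hκR hr0 hrR hs0 hsR
    linarith

end helpers

lemma cden_eq (κ : ℝ) (z : ℂ) :
    (1 - (κ : ℂ) * (‖z‖ : ℂ) ^ 2)
      = ((1 - κ * (‖z‖) ^ 2 : ℝ) : ℂ) := by push_cast; ring

lemma gabs (κ : ℝ) (z : ℂ) (h : κ * (‖z‖) ^ 2 < 1) :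
    ‖z / (1 - (κ : ℂ) * (‖z‖ : ℂ) ^ 2)‖
      = ‖z‖ / (1 - κ * (‖z‖) ^ 2) := by
  rw [norm_div]
  congr 1
  rw [cden_eq, Complex.norm_real, Real.norm_eq_abs, abs_of_pos (by linarith)]

lemma second_eq (κ : ℝ) (z w : ℂ) :
    -((κ : ℂ) * z ^ 2 + w) / (1 + (κ : ℂ) * (starRingEnd ℂ) z ^ 2 * w)
      = Bl ((κ : ℂ) * z ^ 2) w := by
  rw [Bl, map_mul, map_pow, Complex.conj_ofReal]
  ring_nf

lemma abs_c_lt (κ R : ℝ) (hκR : |κ| * R ^ 2 < 1) (z : ℂ) (hz : ‖z‖ ≤ R) :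
    ‖(κ : ℂ) * z ^ 2‖ < 1 := by
  rw [norm_mul, norm_pow, Complex.norm_real, Real.norm_eq_abs]
  have h2 : |κ| * ‖z‖ ^ 2 ≤ |κ| * R ^ 2 :=
    mul_le_mul_of_nonneg_left (by nlinarith [norm_nonneg z]) (abs_nonneg κ)
  linarith

lemma normSq_key (c w : ℂ) :
    Complex.normSq (1 + (starRingEnd ℂ) c * w) - Complex.normSq (w + c)
      = (1 - Complex.normSq c) * (1 - Complex.normSq w) := by
  simp [Complex.normSq_apply, Complex.add_re, Complex.add_im, Complex.mul_re,
    Complex.mul_im, Complex.conj_re, Complex.conj_im, Complex.one_re, Complex.one_im]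
  ring

lemma bl_denom_ne (c w : ℂ) (hc : ‖c‖ < 1) (hw : ‖w‖ < 1) :
    1 + (starRingEnd ℂ) c * w ≠ 0 := by
  intro h
  have : ‖(starRingEnd ℂ) c * w‖ < 1 := by
    rw [norm_mul, Complex.norm_conj]
    nlinarith [norm_nonneg c, norm_nonneg w]
  have h2 : (starRingEnd ℂ) c * w = -1 := by linear_combination h
  rw [h2] at this
  simp at this

lemma bl_abs_lt (c w : ℂ) (hc : ‖c‖ < 1) (hw : ‖w‖ < 1) :
    ‖Bl c w‖ < 1 := by
  have hd := bl_denom_ne c w hc hw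
  have hd' : 0 < ‖1 + (starRingEnd ℂ) c * w‖ := by
    simpa [norm_pos_iff] using hd
  rw [Bl, norm_div, norm_neg, div_lt_one hd']
  have h1 : Complex.normSq (w + c) < Complex.normSq (1 + (starRingEnd ℂ) c * w) := by
    have := normSq_key c w
    have hc2 : Complex.normSq c < 1 := by
      rw [Complex.normSq_eq_norm_sq]; nlinarith [norm_nonneg c]
    have hw2 : Complex.normSq w < 1 := by
      rw [Complex.normSq_eq_norm_sq]; nlinarith [norm_nonneg w]
    nlinarith
  have := Real.sqrt_lt_sqrt (Complex.normSq_nonneg _) h1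
  simpa [Complex.norm_def] using this

lemma bl_invol (c w : ℂ) (hc : ‖c‖ < 1) (hw : ‖w‖ < 1) :
    Bl c (Bl c w) = w := by
  have hd := bl_denom_ne c w hc hw
  have hs : 1 - (starRingEnd ℂ) c * c ≠ 0 := by
    intro h
    have : (starRingEnd ℂ) c * c = 1 := by linear_combination -h
    have := congrArg (fun x : ℂ => ‖x‖) this
    rw [norm_mul, Complex.norm_conj] at this
    simp at this
    nlinarith [norm_nonneg c]
  have hden : 1 + (starRingEnd ℂ) c * Bl c w
      = (1 - (starRingEnd ℂ) c * c) / (1 + (starRingEnd ℂ) c * w) := by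
    rw [Bl]; field_simp; ring
  rw [Bl, hden]
  rw [Bl]
  have hd2 : 1 + w * (starRingEnd ℂ) c ≠ 0 := by rwa [mul_comm]
  have hs2 : 1 - c * (starRingEnd ℂ) c ≠ 0 := by rwa [mul_comm]
  field_simp
  ring

/-- The map `(z, μ²) ↦ (a, τ²)` with `a = z/(1-κ|z|²)` and
`τ² = -(κz²+μ²)/(1+κz̄²μ²)` is a bijection from `{|z| ≤ R} × {|μ²| < 1}`
onto `{|a| ≤ R/(1-κR²)} × {|τ²| < 1}`. -/
theorem a_tau_bijection (κ R : ℝ) (hR : 0 < R) (hκR : |κ| * R ^ 2 < 1) :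
    Set.BijOn
      (fun p : ℂ × ℂ =>
        (p.1 / (1 - (κ : ℂ) * (‖p.1‖ : ℂ) ^ 2),
          -((κ : ℂ) * p.1 ^ 2 + p.2) / (1 + (κ : ℂ) * (starRingEnd ℂ) p.1 ^ 2 * p.2)))
      (Metric.closedBall 0 R ×ˢ Metric.ball 0 1)
      (Metric.closedBall 0 (R / (1 - κ * R ^ 2)) ×ˢ Metric.ball 0 1) := by
  have hR0 : (0 : ℝ) ≤ R := hR.le
  refine ⟨?_, ?_, ?_⟩
  · -- MapsTo
    rintro ⟨z, w⟩ hp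
    simp only [Set.mem_prod, Metric.mem_closedBall, Metric.mem_ball, Complex.dist_eq,
      sub_zero] at hp ⊢
    obtain ⟨hz, hw⟩ := hp
    have habsz := norm_nonneg z
    constructor
    · have hκz : κ * (‖z‖) ^ 2 < 1 := by
        have := den_pos κ R hκR habsz hz; linarith
      rw [gabs κ z hκz]
      exact phi_le κ R hκR habsz hz
    · rw [second_eq]
      exact bl_abs_lt _ _ (abs_c_lt κ R hκR z hz) hw
  · -- InjOn
    rintro ⟨z₁, w₁⟩ hp ⟨z₂, w₂⟩ hq h
    simp only [Set.mem_prod, Metric.mem_closedBall, Metric.mem_ball, Complex.dist_eq,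
      sub_zero] at hp hq
    simp only [Prod.mk.injEq] at h
    obtain ⟨h1, h2⟩ := h
    have hκz1 : κ * (‖z₁‖) ^ 2 < 1 := by
      have := den_pos κ R hκR (norm_nonneg z₁) hp.1; linarith
    have hκz2 : κ * (‖z₂‖) ^ 2 < 1 := by
      have := den_pos κ R hκR (norm_nonneg z₂) hq.1; linarith
    have habs : ‖z₁‖ = ‖z₂‖ := by
      have hh := congrArg (fun x : ℂ => ‖x‖) h1
      rw [gabs κ z₁ hκz1, gabs κ z₂ hκz2] at hh
      exact phi_inj κ R hκR (norm_nonneg z₁) hp.1 (norm_nonneg z₂) hq.1 hh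
    have hz : z₁ = z₂ := by
      have hd1 : (1 - (κ : ℂ) * (‖z₁‖ : ℂ) ^ 2) ≠ 0 := by
        rw [cden_eq]
        exact_mod_cast ne_of_gt (den_pos κ R hκR (norm_nonneg z₁) hp.1)
      rw [habs] at h1 hd1
      rw [div_eq_div_iff hd1 hd1] at h1
      exact mul_right_cancel₀ hd1 h1
    subst hz
    rw [second_eq, second_eq] at h2
    have hc := abs_c_lt κ R hκR z₁ hp.1
    have h3 := congrArg (Bl ((κ : ℂ) * z₁ ^ 2)) h2
    rw [bl_invol _ _ hc hp.2, bl_invol _ _ hc hq.2] at h3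
    rw [h3]
  · -- SurjOn
    rintro ⟨a, τ⟩ hq
    simp only [Set.mem_prod, Metric.mem_closedBall, Metric.mem_ball, Complex.dist_eq,
      sub_zero] at hq
    obtain ⟨ha, hτ⟩ := hq
    have hcont : ContinuousOn (fun r : ℝ => r / (1 - κ * r ^ 2)) (Set.Icc 0 R) := by
      apply ContinuousOn.div continuousOn_id (by fun_prop)
      exact fun r hr => ne_of_gt (den_pos κ R hκR hr.1 hr.2)
    have hivt := intermediate_value_Icc hR0 hcont
    have hmem : ‖a‖ ∈
        Set.Icc ((fun r : ℝ => r / (1 - κ * r ^ 2)) 0) ((fun r : ℝ => r / (1 - κ * r ^ 2)) R) := by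
      simp only
      constructor
      · simpa using norm_nonneg a
      · exact ha
    obtain ⟨r, ⟨hr0, hrR⟩, hrφ⟩ := hivt hmem
    simp only at hrφ
    have hdr := den_pos κ R hκR hr0 hrR
    rcases eq_or_ne a 0 with rfl | ha0
    · refine ⟨(0, Bl 0 τ), ⟨?_, ?_⟩, ?_⟩
      · simpa using hR0
      · simpa [Complex.dist_eq] using bl_abs_lt 0 τ (by simp) hτ
      · simp only [Prod.mk.injEq]
        constructor
        · simp
        · have : -((κ : ℂ) * 0 ^ 2 + Bl 0 τ) / (1 + (κ : ℂ) * (starRingEnd ℂ) 0 ^ 2 * Bl 0 τ)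
              = Bl ((κ : ℂ) * 0 ^ 2) (Bl 0 τ) := second_eq κ 0 (Bl 0 τ)
          rw [this]
          have h0 : ((κ : ℂ) * 0 ^ 2) = 0 := by ring
          rw [h0]
          exact bl_invol 0 τ (by simp) hτ
    · have haa : 0 < ‖a‖ := norm_pos_iff.mpr ha0
      have hrpos : 0 < r := by
        rcases lt_or_eq_of_le hr0 with h | h
        · exact h
        · exfalso; rw [← h] at hrφ; simp at hrφ; linarith
      set z : ℂ := ((r / ‖a‖ : ℝ) : ℂ) * a with hzdef
      have hzabs : ‖z‖ = r := by
        rw [hzdef, norm_mul, Complex.norm_real, Real.norm_eq_abs, abs_of_nonneg (div_nonneg hr0 haa.le)]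
        field_simp
      have hdz : (1 - (κ : ℂ) * (‖z‖ : ℂ) ^ 2) ≠ 0 := by
        rw [cden_eq, hzabs]
        exact_mod_cast ne_of_gt hdr
      have hreal : (1 - κ * r ^ 2) = r / ‖a‖ := by
        rw [eq_div_iff (ne_of_gt haa)]
        rw [div_eq_iff (ne_of_gt hdr)] at hrφ
        linear_combination -hrφ
      have hgz : z / (1 - (κ : ℂ) * (‖z‖ : ℂ) ^ 2) = a := by
        rw [cden_eq, hzabs]
        rw [hreal]
        rw [hzdef]
        have hne : ((r / ‖a‖ : ℝ) : ℂ) ≠ 0 := by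
          simp only [ne_eq, Complex.ofReal_eq_zero]
          positivity
        exact mul_div_cancel_left₀ a hne
      have hzR : ‖z‖ ≤ R := by rw [hzabs]; exact hrR
      have hc := abs_c_lt κ R hκR z hzR
      refine ⟨(z, Bl ((κ : ℂ) * z ^ 2) τ), ⟨?_, ?_⟩, ?_⟩
      · simpa [Complex.dist_eq] using hzR
      · simpa [Complex.dist_eq] using bl_abs_lt _ τ hc hτ
      · simp only [Prod.mk.injEq]
        exact ⟨hgz, by rw [second_eq]; exact bl_invol _ τ hc hτ⟩
end

section
/- Let κ ∈ ℝ, R > 0 with |κ|R² < 1, and let (w,ξ) = β(z,μ) with β as in the constant-curvature blow-down map. Then κw² + ξ² = (κz² + μ²)/(1 + κz̄²μ²) and w + w̄(κw² + ξ²) = (z/(1 - κ|z|²))·(1 - |κw² + ξ²|²) hold as identities, where defined. -/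
/-- The identities `κw² + ξ² = (κz² + μ²)/(1 + κz̄²μ²)` and
`w + w̄(κw² + ξ²) = (z/(1 - κ|z|²))·(1 - |κw² + ξ²|²)` for
`(w,ξ) = β(z,μ)` with the constant-curvature blow-down map `β`. -/
theorem beta_kappa_identities (κ R : ℝ) (hR : 0 < R) (hκR : |κ| * R ^ 2 < 1)
    (z μ : ℂ) (hz : ‖z‖ ≤ R) (hμ : ‖μ‖ < 1) :
    letI D : ℂ := 1 + (κ : ℂ) * (starRingEnd ℂ) z ^ 2 * μ ^ 2
    letI w : ℂ := (z - μ ^ 2 * (starRingEnd ℂ) z) / D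
    letI ξ : ℂ := μ * (1 + (κ : ℂ) * (‖z‖ : ℂ) ^ 2) / D
    (κ : ℂ) * w ^ 2 + ξ ^ 2 = ((κ : ℂ) * z ^ 2 + μ ^ 2) / D ∧
    w + (starRingEnd ℂ) w * ((κ : ℂ) * w ^ 2 + ξ ^ 2) =
      z / (1 - (κ : ℂ) * (‖z‖ : ℂ) ^ 2) *
        (1 - (‖(κ : ℂ) * w ^ 2 + ξ ^ 2‖ : ℂ) ^ 2) := by
  have hsq : ‖z‖ ^ 2 ≤ R ^ 2 := by
    nlinarith [norm_nonneg z]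
  have hzR : |κ| * ‖z‖ ^ 2 < 1 :=
    lt_of_le_of_lt (mul_le_mul_of_nonneg_left hsq (abs_nonneg κ)) hκR
  have hμ1 : ‖μ‖ ^ 2 ≤ 1 := by nlinarith [norm_nonneg μ]
  have habs : ‖(κ:ℂ) * (starRingEnd ℂ) z ^ 2 * μ ^ 2‖ < 1 := by
    simp only [norm_mul, norm_pow, Complex.norm_real, Real.norm_eq_abs, Complex.norm_conj]
    nlinarith [norm_nonneg z, norm_nonneg μ, abs_nonneg κ,
      sq_nonneg (‖z‖), sq_nonneg (‖μ‖)]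
  have hD : (1 + (κ:ℂ) * (starRingEnd ℂ) z ^ 2 * μ ^ 2) ≠ 0 := by
    intro h
    have : (κ:ℂ) * (starRingEnd ℂ) z ^ 2 * μ ^ 2 = -1 := by linear_combination h
    rw [this] at habs; simp at habs
  have habs2 : ‖(κ:ℂ) * z ^ 2 * (starRingEnd ℂ) μ ^ 2‖ < 1 := by
    simp only [norm_mul, norm_pow, Complex.norm_real, Real.norm_eq_abs, Complex.norm_conj]
    nlinarith [norm_nonneg z, norm_nonneg μ, abs_nonneg κ,
      sq_nonneg (‖z‖), sq_nonneg (‖μ‖)]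
  have hD2 : (1 + (κ:ℂ) * z ^ 2 * (starRingEnd ℂ) μ ^ 2) ≠ 0 := by
    intro h
    have : (κ:ℂ) * z ^ 2 * (starRingEnd ℂ) μ ^ 2 = -1 := by linear_combination h
    rw [this] at habs2; simp at habs2
  have hz2 : ((‖z‖ : ℂ))^2 = z * (starRingEnd ℂ) z := by
    rw [Complex.mul_conj, Complex.normSq_eq_norm_sq]; push_cast; ring
  have hE : (1 - (κ:ℂ) * (z * (starRingEnd ℂ) z)) ≠ 0 := by
    intro h
    have h2 : (κ:ℂ) * (z * (starRingEnd ℂ) z) = 1 := by linear_combination -h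
    have := congrArg (‖·‖) h2
    simp only [norm_mul, Complex.norm_real, Real.norm_eq_abs, Complex.norm_conj, norm_one] at this
    nlinarith [norm_nonneg z]
  have key1 : (κ:ℂ) * ((z - μ ^ 2 * (starRingEnd ℂ) z) / (1 + (κ:ℂ) * (starRingEnd ℂ) z ^ 2 * μ ^ 2)) ^ 2
      + (μ * (1 + (κ:ℂ) * (‖z‖ : ℂ) ^ 2) / (1 + (κ:ℂ) * (starRingEnd ℂ) z ^ 2 * μ ^ 2)) ^ 2
      = ((κ:ℂ) * z ^ 2 + μ ^ 2) / (1 + (κ:ℂ) * (starRingEnd ℂ) z ^ 2 * μ ^ 2) := by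
    rw [hz2]; field_simp [show (1 + (κ:ℂ) * μ ^ 2 * (starRingEnd ℂ) z ^ 2) ≠ 0 by convert hD using 1; ring]; ring
  refine ⟨key1, ?_⟩
  rw [key1]
  have hS2 : ((‖((κ:ℂ) * z ^ 2 + μ ^ 2) / (1 + (κ:ℂ) * (starRingEnd ℂ) z ^ 2 * μ ^ 2)‖ : ℂ))^2
      = (((κ:ℂ) * z ^ 2 + μ ^ 2) / (1 + (κ:ℂ) * (starRingEnd ℂ) z ^ 2 * μ ^ 2)) *
        (starRingEnd ℂ) (((κ:ℂ) * z ^ 2 + μ ^ 2) / (1 + (κ:ℂ) * (starRingEnd ℂ) z ^ 2 * μ ^ 2)) := by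
    rw [Complex.mul_conj, Complex.normSq_eq_norm_sq]; push_cast; ring
  rw [hS2, hz2]
  simp only [map_div₀, map_sub, map_add, map_mul, map_pow, map_one, Complex.conj_conj,
    Complex.conj_ofReal]
  field_simp [show (1 + μ ^ 2 * (starRingEnd ℂ) z ^ 2 * (κ:ℂ)) ≠ 0 by convert hD using 1; ring,
    show (1 + z ^ 2 * (κ:ℂ) * (starRingEnd ℂ) μ ^ 2) ≠ 0 by convert hD2 using 1; ring,
    show (1 - z * (starRingEnd ℂ) z * (κ:ℂ)) ≠ 0 by convert hE using 1; ring]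
  ring
end
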